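/- arXiv:1707.09639 — 4 statements merged into one kernel-verified Lean document; each statement's English description precedes it below -/
import Mathlib

section
/- Let A and B be nonempty closed convex sets in a real Hilbert space such that the distance between them is attained, i.e., there exist a ∈ A, b ∈ B with ‖a − b‖ = inf{‖x − y‖ : x ∈ A, y ∈ B}. Then a point a ∈ A satisfies ‖a − P_B(a)‖ = inf{‖x − y‖ : x ∈ A, y ∈ B} if and only if a is a fixed point of the composition P_A ∘ P_B. -/
/-!
Nearest points on a convex set are characterized by the variational inequality
`⟪u - v, w - v⟫ ≤ 0`. If `a ∈ A` and `b ∈ B` are mutually nearest, adding the two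
variational inequalities gives `‖a - b‖² ≤ ⟪a - b, x - y⟫ ≤ ‖a - b‖ ‖x - y‖` for all
`x ∈ A`, `y ∈ B`, so `‖a - b‖` is the distance between `A` and `B`. Conversely, if
`‖a - P_B a‖` is that distance, then `a` is a nearest point of `A` to `P_B a`, hence equals
`P_A (P_B a)` because nearest points on convex sets are unique.
-/

open scoped RealInnerProductSpace

section NearestPoint

variable {E : Type*} [NormedAddCommGroup E] [InnerProductSpace ℝ E] {K : Set E} {u v w : E}

lemma real_inner_sub_le_zero_of_forall_norm_sub_le (hK : Convex ℝ K) (hv : v ∈ K)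
    (hmin : ∀ y ∈ K, ‖u - v‖ ≤ ‖u - y‖) (hw : w ∈ K) : ⟪u - v, w - v⟫ ≤ 0 := by
  have : Nonempty K := ⟨⟨v, hv⟩⟩
  have hinf : ‖u - v‖ = ⨅ y : K, ‖u - y‖ :=
    le_antisymm (le_ciInf fun y => hmin y y.2)
      (ciInf_le (f := fun y : K => ‖u - y‖) ⟨0, by rintro r ⟨y, rfl⟩; exact norm_nonneg _⟩ ⟨v, hv⟩)
  exact (norm_eq_iInf_iff_real_inner_le_zero hK hv).mp hinf w hw

lemma eq_of_forall_norm_sub_le (hK : Convex ℝ K) (hv : v ∈ K) (hw : w ∈ K)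
    (hminv : ∀ y ∈ K, ‖u - v‖ ≤ ‖u - y‖) (hminw : ∀ y ∈ K, ‖u - w‖ ≤ ‖u - y‖) : v = w := by
  have hv' := real_inner_sub_le_zero_of_forall_norm_sub_le hK hv hminv hw
  have hw' := real_inner_sub_le_zero_of_forall_norm_sub_le hK hw hminw hv
  have hsum : ⟪u - v, w - v⟫ + ⟪u - w, v - w⟫ = ⟪w - v, w - v⟫ := by
    rw [← neg_sub w u, ← neg_sub w v, inner_neg_neg, ← inner_add_left]
    congr 1
    abel
  have hzero : w - v = 0 := real_inner_self_nonpos.mp (by linarith)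
  exact (sub_eq_zero.mp hzero).symm

lemma forall_norm_sub_le_of_mutually_nearest {A B : Set E} {a b : E}
    (hA : Convex ℝ A) (hB : Convex ℝ B) (ha : a ∈ A) (hb : b ∈ B)
    (hab : ∀ x ∈ A, ‖b - a‖ ≤ ‖b - x‖) (hba : ∀ y ∈ B, ‖a - b‖ ≤ ‖a - y‖) :
    ∀ x ∈ A, ∀ y ∈ B, ‖a - b‖ ≤ ‖x - y‖ := by
  intro x hx y hy
  have hxa := real_inner_sub_le_zero_of_forall_norm_sub_le hA ha hab hx
  have hyb := real_inner_sub_le_zero_of_forall_norm_sub_le hB hb hba hy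
  have hsum : ⟪a - b, x - y⟫ + ⟪b - a, x - a⟫ + ⟪a - b, y - b⟫ = ‖a - b‖ ^ 2 := by
    rw [← neg_sub a b, inner_neg_left, ← sub_eq_add_neg, ← inner_sub_right, ← inner_add_right,
      ← real_inner_self_eq_norm_sq]
    congr 1
    abel
  have hcs : ⟪a - b, x - y⟫ ≤ ‖a - b‖ * ‖x - y‖ := real_inner_le_norm _ _
  nlinarith [norm_nonneg (a - b), norm_nonneg (x - y)]

end NearestPoint

lemma norm_sub_eq_sInf_iff {E : Type*} [SeminormedAddCommGroup E] {A B : Set E} {a b : E}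
    (ha : a ∈ A) (hb : b ∈ B) :
    ‖a - b‖ = sInf {r : ℝ | ∃ x ∈ A, ∃ y ∈ B, r = ‖x - y‖} ↔
      ∀ x ∈ A, ∀ y ∈ B, ‖a - b‖ ≤ ‖x - y‖ := by
  have hbdd : BddBelow {r : ℝ | ∃ x ∈ A, ∃ y ∈ B, r = ‖x - y‖} :=
    ⟨0, by rintro r ⟨x, -, y, -, rfl⟩; exact norm_nonneg _⟩
  constructor
  · rintro h x hx y hy
    exact h ▸ csInf_le hbdd ⟨x, hx, y, hy, rfl⟩
  · intro h
    have hleast : IsLeast {r : ℝ | ∃ x ∈ A, ∃ y ∈ B, r = ‖x - y‖} ‖a - b‖ :=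
      ⟨⟨a, ha, b, hb, rfl⟩, by rintro r ⟨x, hx, y, hy, rfl⟩; exact h x hx y hy⟩
    exact hleast.csInf_eq.symm

theorem stmt_1_general
    {E : Type*} [NormedAddCommGroup E] [InnerProductSpace ℝ E]
    (A B : Set E)
    (hAconv : Convex ℝ A) (hBconv : Convex ℝ B)
    (PA PB : E → E)
    (hPA : ∀ x, PA x ∈ A ∧ ∀ y ∈ A, ‖x - PA x‖ ≤ ‖x - y‖)
    (hPB : ∀ x, PB x ∈ B ∧ ∀ y ∈ B, ‖x - PB x‖ ≤ ‖x - y‖) :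
    ∀ a ∈ A, (‖a - PB a‖ = sInf {r : ℝ | ∃ x ∈ A, ∃ y ∈ B, r = ‖x - y‖}
      ↔ PA (PB a) = a) := by
  intro a ha
  obtain ⟨hPBa, hPBa_min⟩ := hPB a
  rw [norm_sub_eq_sInf_iff ha hPBa]
  constructor
  · intro hmin
    refine eq_of_forall_norm_sub_le hAconv (hPA _).1 ha (hPA _).2 fun x hx => ?_
    rw [norm_sub_rev, norm_sub_rev _ x]
    exact hmin x hx _ hPBa
  · intro hfix
    have hnearest := (hPA (PB a)).2
    rw [hfix] at hnearest
    exact forall_norm_sub_le_of_mutually_nearest hAconv hBconv ha hPBa hnearest hPBa_min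

theorem stmt_1
    {E : Type*} [NormedAddCommGroup E] [InnerProductSpace ℝ E] [CompleteSpace E]
    (A B : Set E) (hA : A.Nonempty) (hB : B.Nonempty)
    (hAc : IsClosed A) (hBc : IsClosed B)
    (hAconv : Convex ℝ A) (hBconv : Convex ℝ B)
    (PA PB : E → E)
    (hPA : ∀ x, PA x ∈ A ∧ ∀ y ∈ A, ‖x - PA x‖ ≤ ‖x - y‖)
    (hPB : ∀ x, PB x ∈ B ∧ ∀ y ∈ B, ‖x - PB x‖ ≤ ‖x - y‖)
    (hattain : ∃ a ∈ A, ∃ b ∈ B,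
      ‖a - b‖ = sInf {r : ℝ | ∃ x ∈ A, ∃ y ∈ B, r = ‖x - y‖}) :
    ∀ a ∈ A, (‖a - PB a‖ = sInf {r : ℝ | ∃ x ∈ A, ∃ y ∈ B, r = ‖x - y‖}
      ↔ PA (PB a) = a) :=
  stmt_1_general A B hAconv hBconv PA PB hPA hPB
end

section
/- Let A and B be nonempty closed convex subsets of ℝ^d such that the distance between them is attained. If S is a nonempty compact set with (P_A ∘ P_B)(S) = S, then every point of S is a point of A nearest to B, i.e., for every s ∈ S, ‖s − P_B(s)‖ = inf{‖x − y‖ : x ∈ A, y ∈ B}. -/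
/-!
Let `s₀` maximise the continuous function `s ↦ ‖s - P_B s‖ = dist(s, B)` on the compact set `S`,
and write `s₀ = P_A b` with `b = P_B s₁`, `s₁ ∈ S ⊆ A`. Then
`‖s₀ - P_B s₀‖ ≤ ‖s₀ - b‖ ≤ ‖s₁ - b‖ ≤ ‖s₀ - P_B s₀‖`, so `s₁` is a point of `A` nearest to `b`
while `b` is the point of `B` nearest to `s₁`. By the variational inequalities of the two
projections, such a mutually nearest pair realises `dist(A, B)`. Hence every `s ∈ S` satisfies
`dist(A, B) ≤ ‖s - P_B s‖ ≤ ‖s₀ - P_B s₀‖ ≤ ‖s₁ - b‖ = dist(A, B)`.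
-/

open Metric RealInnerProductSpace

lemma infDist_eq_norm_sub_of_forall_norm_sub_le {E : Type*} [SeminormedAddCommGroup E]
    {K : Set E} {u v : E} (hv : v ∈ K) (hmin : ∀ y ∈ K, ‖u - v‖ ≤ ‖u - y‖) :
    infDist u K = ‖u - v‖ := by
  refine le_antisymm ?_ ((le_infDist ⟨v, hv⟩).2 fun y hy => ?_)
  · simpa only [dist_eq_norm] using infDist_le_dist_of_mem hv
  · simpa only [dist_eq_norm] using hmin y hy

section InnerProductSpace

variable {E : Type*} [NormedAddCommGroup E] [InnerProductSpace ℝ E]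

lemma real_inner_le_zero_of_forall_norm_sub_le {K : Set E} (hK : Convex ℝ K) {u v : E}
    (hv : v ∈ K) (hmin : ∀ y ∈ K, ‖u - v‖ ≤ ‖u - y‖) : ∀ w ∈ K, ⟪u - v, w - v⟫ ≤ 0 := by
  have : Nonempty K := ⟨⟨v, hv⟩⟩
  refine (norm_eq_iInf_iff_real_inner_le_zero hK hv).1
    (le_antisymm (le_ciInf fun w => hmin w w.2) ?_)
  exact ciInf_le ⟨0, Set.forall_mem_range.2 fun _ => norm_nonneg _⟩ (⟨v, hv⟩ : K)

lemma norm_sub_le_of_mutually_nearest {A B : Set E} (hA : Convex ℝ A) (hB : Convex ℝ B)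
    {a b : E} (ha : a ∈ A) (hb : b ∈ B)
    (ha_min : ∀ x ∈ A, ‖b - a‖ ≤ ‖b - x‖) (hb_min : ∀ y ∈ B, ‖a - b‖ ≤ ‖a - y‖) :
    ∀ x ∈ A, ∀ y ∈ B, ‖a - b‖ ≤ ‖x - y‖ := by
  intro x hx y hy
  have hxa := real_inner_le_zero_of_forall_norm_sub_le hA ha ha_min x hx
  have hyb := real_inner_le_zero_of_forall_norm_sub_le hB hb hb_min y hy
  -- In `x - y = (x - a) + (a - b) + (b - y)` both outer terms pair nonnegatively with `a - b`.
  have hsq : ‖a - b‖ ^ 2 ≤ ⟪x - y, a - b⟫ := by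
    simp only [inner_sub_left, inner_sub_right, real_inner_comm a x, real_inner_comm b x,
      real_inner_comm a y, real_inner_comm b y, real_inner_comm a b,
      ← real_inner_self_eq_norm_sq] at hxa hyb ⊢
    linarith
  nlinarith [real_inner_le_norm (x - y) (a - b), norm_nonneg (a - b), norm_nonneg (x - y)]

end InnerProductSpace

theorem stmt_2_general
    {d : ℕ}
    (A B : Set (EuclideanSpace ℝ (Fin d)))
    (hAconv : Convex ℝ A) (hBconv : Convex ℝ B)
    (PA PB : EuclideanSpace ℝ (Fin d) → EuclideanSpace ℝ (Fin d))
    (hPA : ∀ x, PA x ∈ A ∧ ∀ y ∈ A, ‖x - PA x‖ ≤ ‖x - y‖)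
    (hPB : ∀ x, PB x ∈ B ∧ ∀ y ∈ B, ‖x - PB x‖ ≤ ‖x - y‖)
    (S : Set (EuclideanSpace ℝ (Fin d))) (hS : S.Nonempty) (hScomp : IsCompact S)
    (hfix : (PA ∘ PB) '' S = S) :
    ∀ s ∈ S, ‖s - PB s‖ = sInf {r : ℝ | ∃ x ∈ A, ∃ y ∈ B, r = ‖x - y‖} := by
  have hSA : S ⊆ A := by
    rw [← hfix]
    rintro _ ⟨x, -, rfl⟩
    exact (hPA _).1
  have hdist : (fun x => ‖x - PB x‖) = fun x => infDist x B :=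
    funext fun x => (infDist_eq_norm_sub_of_forall_norm_sub_le (hPB x).1 (hPB x).2).symm
  obtain ⟨s₀, hs₀, hmax⟩ := hScomp.exists_isMaxOn hS
    (hdist ▸ (continuous_infDist_pt B).continuousOn)
  obtain ⟨s₁, hs₁, rfl⟩ : s₀ ∈ (PA ∘ PB) '' S := hfix.symm ▸ hs₀
  set b := PB s₁
  have hstep : ‖PA b - PB (PA b)‖ ≤ ‖PA b - b‖ := (hPB _).2 b (hPB s₁).1
  have hproj : ∀ y ∈ A, ‖PA b - b‖ ≤ ‖b - y‖ := fun y hy => by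
    simpa only [norm_sub_rev b] using (hPA b).2 y hy
  have hs₁_near : ∀ y ∈ A, ‖b - s₁‖ ≤ ‖b - y‖ := fun y hy => by
    rw [norm_sub_rev]
    exact (hmax hs₁).trans (hstep.trans (hproj y hy))
  have hgap := norm_sub_le_of_mutually_nearest hAconv hBconv (hSA hs₁) (hPB s₁).1
    hs₁_near (hPB s₁).2
  have hinf : sInf {r : ℝ | ∃ x ∈ A, ∃ y ∈ B, r = ‖x - y‖} = ‖s₁ - b‖ :=
    IsLeast.csInf_eq ⟨⟨s₁, hSA hs₁, b, (hPB s₁).1, rfl⟩,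
      by rintro _ ⟨x, hx, y, hy, rfl⟩; exact hgap x hx y hy⟩
  intro s hs
  rw [hinf]
  refine le_antisymm ?_ (hgap s (hSA hs) (PB s) (hPB s).1)
  calc ‖s - PB s‖ ≤ ‖PA b - PB (PA b)‖ := hmax hs
    _ ≤ ‖s₁ - b‖ := hstep.trans (by simpa only [norm_sub_rev s₁] using hproj s₁ (hSA hs₁))

theorem stmt_2
    {d : ℕ}
    (A B : Set (EuclideanSpace ℝ (Fin d))) (hA : A.Nonempty) (hB : B.Nonempty)
    (hAc : IsClosed A) (hBc : IsClosed B)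
    (hAconv : Convex ℝ A) (hBconv : Convex ℝ B)
    (PA PB : EuclideanSpace ℝ (Fin d) → EuclideanSpace ℝ (Fin d))
    (hPA : ∀ x, PA x ∈ A ∧ ∀ y ∈ A, ‖x - PA x‖ ≤ ‖x - y‖)
    (hPB : ∀ x, PB x ∈ B ∧ ∀ y ∈ B, ‖x - PB x‖ ≤ ‖x - y‖)
    (hattain : ∃ a ∈ A, ∃ b ∈ B,
      ‖a - b‖ = sInf {r : ℝ | ∃ x ∈ A, ∃ y ∈ B, r = ‖x - y‖})
    (S : Set (EuclideanSpace ℝ (Fin d))) (hS : S.Nonempty) (hScomp : IsCompact S)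
    (hfix : (PA ∘ PB) '' S = S) :
    ∀ s ∈ S, ‖s - PB s‖ = sInf {r : ℝ | ∃ x ∈ A, ∃ y ∈ B, r = ‖x - y‖} :=
  stmt_2_general A B hAconv hBconv PA PB hPA hPB S hS hScomp hfix
end

section
/- Let A and B be nonempty closed convex subsets of ℝ^d whose distance is attained, let v be the projection of the origin onto the closed convex set A − B = {x − y : x ∈ A, y ∈ B}, and set T := A ∩ (B + v). Then T is exactly the set of points of A nearest to B, i.e., T = {a ∈ A : ‖a − P_B(a)‖ = inf{‖x − y‖ : x ∈ A, y ∈ B}}. -/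
/-! A point `a ∈ A` is nearest to `B` exactly when `a - P_B a` has minimal norm in `A - B`.
By strict convexity of the norm, the minimal-norm point of the convex set `A - B` is unique, so
this happens exactly when `a - P_B a = v`, i.e. `a ∈ B + v`. -/

open Set
open scoped Pointwise

section StrictConvex

variable {E : Type*} [NormedAddCommGroup E] [NormedSpace ℝ E] [StrictConvexSpace ℝ E]

theorem Convex.eq_of_isMinOn_norm {S : Set E} (hS : Convex ℝ S) {v w : E} (hv : v ∈ S)
    (hmin : IsMinOn (‖·‖) S v) (hw : w ∈ S) (hwv : ‖w‖ = ‖v‖) : w = v := by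
  by_contra hne
  have hmid : (1 / 2 : ℝ) • w + (1 / 2 : ℝ) • v ∈ S :=
    hS hw hv (by norm_num) (by norm_num) (by norm_num)
  have hlt : ‖(1 / 2 : ℝ) • w + (1 / 2 : ℝ) • v‖ < ‖v‖ :=
    norm_combo_lt_of_ne hwv.le le_rfl hne (by norm_num) (by norm_num) (by norm_num)
  exact (hmin hmid).not_gt hlt

theorem inter_image_add_eq_setOf_norm_sub_proj_eq {A B : Set E} (hA : Convex ℝ A)
    (hB : Convex ℝ B) {PB : E → E} (hPB : ∀ x, PB x ∈ B ∧ ∀ y ∈ B, ‖x - PB x‖ ≤ ‖x - y‖)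
    {v : E} (hv : v ∈ A - B) (hmin : IsMinOn (‖·‖) (A - B) v) :
    A ∩ ((· + v) '' B) = {a ∈ A | ‖a - PB a‖ = ‖v‖} := by
  ext a
  constructor
  · rintro ⟨haA, b, hbB, rfl⟩
    have hle : ‖b + v - PB (b + v)‖ ≤ ‖v‖ := by
      simpa using (hPB (b + v)).2 b hbB
    have hge : ‖v‖ ≤ ‖b + v - PB (b + v)‖ := hmin (sub_mem_sub haA (hPB (b + v)).1)
    exact ⟨haA, le_antisymm hle hge⟩
  · rintro ⟨haA, hnorm⟩
    have heq : a - PB a = v :=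
      (hA.sub hB).eq_of_isMinOn_norm hv hmin (sub_mem_sub haA (hPB a).1) hnorm
    exact ⟨haA, PB a, (hPB a).1, by simp only [← heq, add_sub_cancel]⟩

end StrictConvex

theorem setOf_exists_sub_eq {G : Type*} [Sub G] (A B : Set G) :
    {z | ∃ x ∈ A, ∃ y ∈ B, z = x - y} = A - B := by
  ext z
  simp only [mem_ofPred_eq, mem_sub, eq_comm]

theorem sInf_norm_sub_eq_norm {G : Type*} [SeminormedAddCommGroup G] {A B : Set G} {v : G}
    (hv : v ∈ A - B) (hmin : IsMinOn (‖·‖) (A - B) v) :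
    sInf {r : ℝ | ∃ x ∈ A, ∃ y ∈ B, r = ‖x - y‖} = ‖v‖ := by
  refine IsLeast.csInf_eq ⟨?_, ?_⟩
  · obtain ⟨x, hx, y, hy, rfl⟩ := hv
    exact ⟨x, hx, y, hy, rfl⟩
  · rintro r ⟨x, hx, y, hy, rfl⟩
    exact hmin (sub_mem_sub hx hy)

theorem stmt_10_general
    {d : ℕ}
    (A B : Set (EuclideanSpace ℝ (Fin d)))
    (hAconv : Convex ℝ A) (hBconv : Convex ℝ B)
    (PB : EuclideanSpace ℝ (Fin d) → EuclideanSpace ℝ (Fin d))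
    (hPB : ∀ x, PB x ∈ B ∧ ∀ y ∈ B, ‖x - PB x‖ ≤ ‖x - y‖)
    (v : EuclideanSpace ℝ (Fin d))
    (hv : v ∈ {z | ∃ x ∈ A, ∃ y ∈ B, z = x - y} ∧
      ∀ w ∈ {z | ∃ x ∈ A, ∃ y ∈ B, z = x - y}, ‖v‖ ≤ ‖w‖) :
    A ∩ ((fun b => b + v) '' B)
      = {a ∈ A | ‖a - PB a‖ = sInf {r : ℝ | ∃ x ∈ A, ∃ y ∈ B, r = ‖x - y‖}} := by
  rw [setOf_exists_sub_eq] at hv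
  obtain ⟨hvS, hvmin⟩ := hv
  rw [sInf_norm_sub_eq_norm hvS hvmin]
  exact inter_image_add_eq_setOf_norm_sub_proj_eq hAconv hBconv hPB hvS hvmin

theorem stmt_10
    {d : ℕ}
    (A B : Set (EuclideanSpace ℝ (Fin d))) (hA : A.Nonempty) (hB : B.Nonempty)
    (hAc : IsClosed A) (hBc : IsClosed B)
    (hAconv : Convex ℝ A) (hBconv : Convex ℝ B)
    (PB : EuclideanSpace ℝ (Fin d) → EuclideanSpace ℝ (Fin d))
    (hPB : ∀ x, PB x ∈ B ∧ ∀ y ∈ B, ‖x - PB x‖ ≤ ‖x - y‖)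
    (hattain : ∃ a ∈ A, ∃ b ∈ B,
      ‖a - b‖ = sInf {r : ℝ | ∃ x ∈ A, ∃ y ∈ B, r = ‖x - y‖})
    (v : EuclideanSpace ℝ (Fin d))
    (hv : v ∈ {z | ∃ x ∈ A, ∃ y ∈ B, z = x - y} ∧
      ∀ w ∈ {z | ∃ x ∈ A, ∃ y ∈ B, z = x - y}, ‖v‖ ≤ ‖w‖) :
    A ∩ ((fun b => b + v) '' B)
      = {a ∈ A | ‖a - PB a‖ = sInf {r : ℝ | ∃ x ∈ A, ∃ y ∈ B, r = ‖x - y‖}} :=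
  stmt_10_general A B hAconv hBconv PB hPB v hv
end

section
/- Let A and B be nonempty closed convex subsets of a real Hilbert space whose distance d(A,B) is attained, and let v be the element of minimal norm of the closure of A − B. Then for every a ∈ A with ‖a − P_B(a)‖ = d(A,B), one has P_B(a) = a − v. -/
/-!
Both `v` and `a - P_B a` lie in the convex set `cl (A - B)` and minimize the norm on it: `v` by
definition, and `a - P_B a` because its norm is `d(A,B)`, a lower bound for the norm on `A - B`
and hence on its closure. In a strictly convex space the midpoint of two distinct minimizers
would have strictly smaller norm, so the two coincide.
-/

open Pointwise

theorem Convex.eq_of_isMinOn_norm_s11 {E : Type*} [NormedAddCommGroup E] [NormedSpace ℝ E]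
    [StrictConvexSpace ℝ E] {C : Set E} (hC : Convex ℝ C) {v w : E} (hv : v ∈ C) (hw : w ∈ C)
    (hv_min : IsMinOn norm C v) (hw_min : IsMinOn norm C w) : v = w := by
  by_contra hne
  have hmid : (1 / 2 : ℝ) • v + (1 / 2 : ℝ) • w ∈ C :=
    hC hv hw (by norm_num) (by norm_num) (by norm_num)
  have hlt : ‖(1 / 2 : ℝ) • v + (1 / 2 : ℝ) • w‖ < ‖v‖ :=
    norm_combo_lt_of_ne le_rfl (isMinOn_iff.1 hw_min v hv) hne (by norm_num) (by norm_num)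
      (by norm_num)
  exact hlt.not_ge (isMinOn_iff.1 hv_min _ hmid)

theorem csInf_norm_image_le_of_mem_closure {E : Type*} [SeminormedAddCommGroup E] {S : Set E}
    {z : E} (hz : z ∈ closure S) : sInf (norm '' S) ≤ ‖z‖ :=
  closure_minimal (fun _ hy => csInf_le ⟨0, by rintro _ ⟨_, _, rfl⟩; exact norm_nonneg _⟩
    (Set.mem_image_of_mem _ hy)) (isClosed_le continuous_const continuous_norm) hz

theorem stmt_11_general
    {E : Type*} [NormedAddCommGroup E] [InnerProductSpace ℝ E]
    (A B : Set E)
    (hAconv : Convex ℝ A) (hBconv : Convex ℝ B)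
    (PB : E → E)
    (hPB : ∀ x, PB x ∈ B ∧ ∀ y ∈ B, ‖x - PB x‖ ≤ ‖x - y‖)
    (v : E)
    (hv : v ∈ closure {z | ∃ x ∈ A, ∃ y ∈ B, z = x - y} ∧
      ∀ w ∈ closure {z | ∃ x ∈ A, ∃ y ∈ B, z = x - y}, ‖v‖ ≤ ‖w‖) :
    ∀ a ∈ A, ‖a - PB a‖ = sInf {r : ℝ | ∃ x ∈ A, ∃ y ∈ B, r = ‖x - y‖} →
      PB a = a - v := by
  intro a ha hd
  have hD : {z | ∃ x ∈ A, ∃ y ∈ B, z = x - y} = A - B := by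
    ext z; simp only [Set.mem_ofPred_eq, Set.mem_sub, eq_comm]
  have hR : {r : ℝ | ∃ x ∈ A, ∃ y ∈ B, r = ‖x - y‖} = norm '' (A - B) := by
    ext r
    constructor
    · rintro ⟨x, hx, y, hy, rfl⟩
      exact ⟨x - y, Set.sub_mem_sub hx hy, rfl⟩
    · rintro ⟨_, ⟨x, hx, y, hy, rfl⟩, rfl⟩
      exact ⟨x, hx, y, hy, rfl⟩
  rw [hD] at hv
  rw [hR] at hd
  have hmem : a - PB a ∈ closure (A - B) := subset_closure (Set.sub_mem_sub ha (hPB a).1)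
  have hmin : IsMinOn norm (closure (A - B)) (a - PB a) :=
    isMinOn_iff.2 fun z hz => hd ▸ csInf_norm_image_le_of_mem_closure hz
  rw [(hAconv.sub hBconv).closure.eq_of_isMinOn_norm_s11 hv.1 hmem (isMinOn_iff.2 hv.2) hmin,
    sub_sub_cancel]

theorem stmt_11
    {E : Type*} [NormedAddCommGroup E] [InnerProductSpace ℝ E] [CompleteSpace E]
    (A B : Set E) (hA : A.Nonempty) (hB : B.Nonempty)
    (hAc : IsClosed A) (hBc : IsClosed B)
    (hAconv : Convex ℝ A) (hBconv : Convex ℝ B)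
    (PB : E → E)
    (hPB : ∀ x, PB x ∈ B ∧ ∀ y ∈ B, ‖x - PB x‖ ≤ ‖x - y‖)
    (hattain : ∃ a ∈ A, ∃ b ∈ B,
      ‖a - b‖ = sInf {r : ℝ | ∃ x ∈ A, ∃ y ∈ B, r = ‖x - y‖})
    (v : E)
    (hv : v ∈ closure {z | ∃ x ∈ A, ∃ y ∈ B, z = x - y} ∧
      ∀ w ∈ closure {z | ∃ x ∈ A, ∃ y ∈ B, z = x - y}, ‖v‖ ≤ ‖w‖) :
    ∀ a ∈ A, ‖a - PB a‖ = sInf {r : ℝ | ∃ x ∈ A, ∃ y ∈ B, r = ‖x - y‖} →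
      PB a = a - v :=
  stmt_11_general A B hAconv hBconv PB hPB v hv
end
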